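/- arXiv:gr-qc/9605052 — 7 statements merged into one kernel-verified Lean document; each statement's English description precedes it below -/
import Mathlib

section
/- Let H be a complex Hilbert space and let S₁, S₂, S₃ be subsets of the algebra of bounded (continuous linear) operators on H. Suppose that every element of Sᵢ commutes with every element of Sⱼ whenever i ≠ j, and suppose that the three pairs generate the same von Neumann algebra, i.e. (S₁ ∪ S₂)'' = (S₁ ∪ S₃)'' = (S₂ ∪ S₃)'' = M, where S' denotes the centralizer (commutant) of a subset S in the algebra of bounded operators on H. Then M is commutative: any two elements of M commute. -/
/-- **Proposition 1 (paradox of quantum frames).**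
If `S₁ S₂ S₃` are sets of bounded operators on a complex Hilbert space `H` that pairwise
commute, and each pair of them generates the same von Neumann algebra
`M = (Sᵢ ∪ Sⱼ)''` (double commutant), then `M` is commutative. -/
theorem vonNeumann_three_pairwise_commuting_generating_same_algebra_is_commutative
    {H : Type*} [NormedAddCommGroup H] [InnerProductSpace ℂ H] [CompleteSpace H]
    (S₁ S₂ S₃ M : Set (H →L[ℂ] H))
    (h12 : ∀ a ∈ S₁, ∀ b ∈ S₂, a * b = b * a)
    (h13 : ∀ a ∈ S₁, ∀ b ∈ S₃, a * b = b * a)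
    (h23 : ∀ a ∈ S₂, ∀ b ∈ S₃, a * b = b * a)
    (hM12 : Set.centralizer (Set.centralizer (S₁ ∪ S₂)) = M)
    (hM13 : Set.centralizer (Set.centralizer (S₁ ∪ S₃)) = M)
    (hM23 : Set.centralizer (Set.centralizer (S₂ ∪ S₃)) = M) :
    ∀ a ∈ M, ∀ b ∈ M, a * b = b * a := by
  -- S₁ ⊆ (S₂ ∪ S₃)'
  have h1 : S₁ ⊆ Set.centralizer (S₂ ∪ S₃) := by
    intro a ha b hb
    rcases hb with hb | hb
    · exact (h12 a ha b hb).symm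
    · exact (h13 a ha b hb).symm
  -- S₂ ⊆ (S₁ ∪ S₃)'
  have h2 : S₂ ⊆ Set.centralizer (S₁ ∪ S₃) := by
    intro a ha b hb
    rcases hb with hb | hb
    · exact h12 b hb a ha
    · exact (h23 a ha b hb).symm
  -- M ⊆ S₁' and M ⊆ S₂'
  have hMS1 : M ⊆ Set.centralizer S₁ := by
    rw [← hM23]
    exact Set.centralizer_subset h1
  have hMS2 : M ⊆ Set.centralizer S₂ := by
    rw [← hM13]
    exact Set.centralizer_subset h2
  have hMU : M ⊆ Set.centralizer (S₁ ∪ S₂) := by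
    rw [Set.centralizer_union]
    exact Set.subset_inter hMS1 hMS2
  have hMM : M ⊆ Set.centralizer M := by
    have h := Set.centralizer_subset hMU
    rwa [hM12] at h
  intro a ha b hb
  exact (hMM ha b hb).symm
end

section
/- Let B be a unital associative algebra over ℂ, let n ≥ 3, and let 𝔅 i k (for distinct indices i, k in Fin n) be a family of subalgebras of B with 𝔅 i k = 𝔅 k i. Assume: (Frame) for every index j, B is generated as an algebra by the union of the subalgebras 𝔅 j k over all k ≠ j; (Commut) whenever the four indices i, k, j, l are all distinct, every element of 𝔅 i k commutes with every element of 𝔅 j l; (Covariance) for every permutation π of Fin n there exists an algebra automorphism φ_π of B such that φ_π maps 𝔅 i k onto 𝔅 (π i) (π k) for all distinct i, k. If there exist three distinct indices i, j, k such that every element of 𝔅 j k commutes with every element of 𝔅 j i, then B is commutative. -/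
/-- Auxiliary: a permutation of any type sending three given distinct points to three
given distinct points. -/
lemma exists_perm_three_aux {α : Type*} [DecidableEq α] (a b c a' b' c' : α)
    (hab : a ≠ b) (hac : a ≠ c) (hbc : b ≠ c)
    (hab' : a' ≠ b') (hac' : a' ≠ c') (hbc' : b' ≠ c') :
    ∃ π : Equiv.Perm α, π a = a' ∧ π b = b' ∧ π c = c' := by
  set σ1 : Equiv.Perm α := Equiv.swap a a' with hσ1
  have h1a : σ1 a = a' := Equiv.swap_apply_left a a'
  set t : α := σ1 b with ht
  have hta' : t ≠ a' := by
    rw [ht, ← h1a]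
    exact fun h => hab (σ1.injective h).symm
  set σ2 : Equiv.Perm α := Equiv.swap t b' with hσ2
  have h2a' : σ2 a' = a' := Equiv.swap_apply_of_ne_of_ne (Ne.symm hta') hab'
  have h2t : σ2 t = b' := Equiv.swap_apply_left t b'
  set u : α := σ2 (σ1 c) with hu
  have hua' : u ≠ a' := by
    rw [hu, ← h2a', ← h1a]
    intro h
    exact hac ((σ1.injective (σ2.injective h)).symm)
  have hub' : u ≠ b' := by
    rw [hu, ← h2t, ht]
    intro h
    exact hbc ((σ1.injective (σ2.injective h)).symm)
  set σ3 : Equiv.Perm α := Equiv.swap u c' with hσ3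
  have h3a' : σ3 a' = a' := Equiv.swap_apply_of_ne_of_ne (Ne.symm hua') hac'
  have h3b' : σ3 b' = b' := Equiv.swap_apply_of_ne_of_ne (Ne.symm hub') hbc'
  have h3u : σ3 u = c' := Equiv.swap_apply_left u c'
  refine ⟨(σ1.trans σ2).trans σ3, ?_, ?_, ?_⟩
  · simp only [Equiv.trans_apply, h1a, h2a', h3a']
  · simp only [Equiv.trans_apply, ← ht, h2t, h3b']
  · simp only [Equiv.trans_apply, ← hu, h3u]

/-- **Proposition 2.**
Let `B` be a unital associative `ℂ`-algebra, `n ≥ 3`, and `𝔅 i k` (for distinct `i k : Fin n`)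
a symmetric family of subalgebras of `B` such that:
* (Frame) for every `j`, the subalgebras `𝔅 j k`, `k ≠ j`, generate `B`;
* (Commut) if `i, k, j, l` are all distinct then `𝔅 i k` and `𝔅 j l` commute elementwise;
* (Covariance) every permutation `π` of `Fin n` is implemented by an algebra automorphism
  `φ` of `B` with `φ (𝔅 i k) = 𝔅 (π i) (π k)`.
If for some three distinct indices `i, j, k` the subalgebras `𝔅 j k` and `𝔅 j i` commute
elementwise, then `B` is commutative. -/
theorem commutative_of_quantum_frame_subalgebras_commute
    {B : Type*} [Ring B] [Algebra ℂ B] {n : ℕ} (hn : 3 ≤ n)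
    (𝔅 : Fin n → Fin n → Subalgebra ℂ B)
    (hsymm : ∀ i k : Fin n, i ≠ k → 𝔅 i k = 𝔅 k i)
    (hframe : ∀ j : Fin n, (⨆ k : Fin n, ⨆ _ : k ≠ j, 𝔅 j k) = (⊤ : Subalgebra ℂ B))
    (hcommut : ∀ i k j l : Fin n,
      i ≠ k → i ≠ j → i ≠ l → k ≠ j → k ≠ l → j ≠ l →
      ∀ a ∈ 𝔅 i k, ∀ b ∈ 𝔅 j l, a * b = b * a)
    (hcov : ∀ π : Equiv.Perm (Fin n), ∃ φ : B ≃ₐ[ℂ] B,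
      ∀ i k : Fin n, i ≠ k → (𝔅 i k).map (φ : B →ₐ[ℂ] B) = 𝔅 (π i) (π k))
    (i j k : Fin n) (hij : i ≠ j) (hjk : j ≠ k) (hik : i ≠ k)
    (hcomm : ∀ a ∈ 𝔅 j k, ∀ b ∈ 𝔅 j i, a * b = b * a) :
    ∀ x y : B, x * y = y * x := by
  classical
  -- Step 1: by covariance, any two subalgebras sharing an index commute elementwise.
  have hcomm' : ∀ a b c : Fin n, a ≠ b → a ≠ c → b ≠ c →
      ∀ x ∈ 𝔅 a b, ∀ y ∈ 𝔅 a c, x * y = y * x := by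
    intro a b c hab hac hbc x hx y hy
    obtain ⟨π, hπj, hπk, hπi⟩ :=
      exists_perm_three_aux j k i a b c hjk hij.symm hik.symm hab hac hbc
    obtain ⟨φ, hφ⟩ := hcov π
    have h1 : (𝔅 j k).map (φ : B →ₐ[ℂ] B) = 𝔅 a b := by
      rw [hφ j k hjk, hπj, hπk]
    have h2 : (𝔅 j i).map (φ : B →ₐ[ℂ] B) = 𝔅 a c := by
      rw [hφ j i hij.symm, hπj, hπi]
    rw [← h1] at hx
    rw [← h2] at hy
    obtain ⟨u, hu, rfl⟩ := hx
    obtain ⟨v, hv, rfl⟩ := hy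
    have huv := hcomm u hu v hv
    calc (φ : B →ₐ[ℂ] B) u * (φ : B →ₐ[ℂ] B) v
        = (φ : B →ₐ[ℂ] B) (u * v) := (map_mul _ _ _).symm
      _ = (φ : B →ₐ[ℂ] B) (v * u) := by rw [huv]
      _ = (φ : B →ₐ[ℂ] B) v * (φ : B →ₐ[ℂ] B) u := map_mul _ _ _
  -- Existence of a third index
  have hthird : ∀ a b : Fin n, ∃ l : Fin n, l ≠ a ∧ l ≠ b := by
    intro a b
    by_contra h
    push_neg at h
    have hsub : (Finset.univ : Finset (Fin n)) ⊆ {a, b} := by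
      intro l _
      rcases eq_or_ne l a with rfl | hla
      · simp
      · simp [h l hla]
    have hcard := Finset.card_le_card hsub
    have h2 : ({a, b} : Finset (Fin n)).card ≤ 2 := by
      refine le_trans (Finset.card_insert_le _ _) ?_
      simp
    rw [Finset.card_univ, Fintype.card_fin] at hcard
    omega
  -- Step 2: every 𝔅 a b is central.
  have hcentral : ∀ a b : Fin n, a ≠ b → ∀ x ∈ 𝔅 a b, ∀ y : B, x * y = y * x := by
    intro a b hab x hx y
    obtain ⟨l, hla, hlb⟩ := hthird a b
    have hsup : (⨆ m : Fin n, ⨆ _ : m ≠ l, 𝔅 l m) ≤ Subalgebra.centralizer ℂ {x} := by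
      refine iSup_le fun m => iSup_le fun hml => ?_
      intro z hz
      rw [Subalgebra.mem_centralizer_iff]
      intro g hg
      rw [Set.mem_singleton_iff] at hg
      rw [hg]
      rcases eq_or_ne m a with hma | hma
      · have hz' : z ∈ 𝔅 a l := by
          rw [hsymm a l (Ne.symm hla)]
          rwa [hma] at hz
        exact hcomm' a b l hab (Ne.symm hla) (Ne.symm hlb) x hx z hz'
      · rcases eq_or_ne m b with hmb | hmb
        · have hz' : z ∈ 𝔅 b l := by
            rw [hsymm b l (Ne.symm hlb)]
            rwa [hmb] at hz
          have hx' : x ∈ 𝔅 b a := by rwa [← hsymm a b hab]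
          exact hcomm' b a l (Ne.symm hab) (Ne.symm hlb) (Ne.symm hla) x hx' z hz'
        · exact hcommut a b l m hab (Ne.symm hla) (Ne.symm hma) (Ne.symm hlb)
            (Ne.symm hmb) hml.symm x hx z hz
    have hy : y ∈ Subalgebra.centralizer ℂ ({x} : Set B) := by
      apply hsup
      rw [hframe l]
      exact Algebra.mem_top
    exact (Subalgebra.mem_centralizer_iff ℂ).mp hy x rfl
  -- Step 3: conclude.
  intro x y
  have hsup : (⨆ m : Fin n, ⨆ _ : m ≠ j, 𝔅 j m) ≤ Subalgebra.centralizer ℂ {y} := by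
    refine iSup_le fun m => iSup_le fun hml => ?_
    intro z hz
    rw [Subalgebra.mem_centralizer_iff]
    intro g hg
    rw [Set.mem_singleton_iff] at hg
    rw [hg]
    exact (hcentral j m (Ne.symm hml) z hz y).symm
  have hx : x ∈ Subalgebra.centralizer ℂ ({y} : Set B) := by
    apply hsup
    rw [hframe j]
    exact Algebra.mem_top
  exact ((Subalgebra.mem_centralizer_iff ℂ).mp hx y rfl).symm
end

section
/- Let A be a nontrivial complex unital Banach algebra (1 ≠ 0). Then there do not exist an element a ∈ A, an invertible element u ∈ A, and a nonzero complex number E such that u * a * u⁻¹ = a − E • 1. -/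
open Pointwise


/-- **Pauli's argument.**
In a nontrivial complex unital Banach algebra there are no element `a`, invertible element `u`
and nonzero complex number `E` with `u * a * u⁻¹ = a - E • 1`.  (Otherwise the nonempty compact
spectrum of `a` would be invariant under the translation by `-E`.) -/
theorem no_conjugation_shifts_by_nonzero_scalar
    {A : Type*} [NormedRing A] [NormedAlgebra ℂ A] [CompleteSpace A] [Nontrivial A] :
    ¬ ∃ (a : A) (u : Aˣ) (E : ℂ), E ≠ 0 ∧
      (u : A) * a * (↑u⁻¹ : A) = a - E • (1 : A) := by
  rintro ⟨a, u, E, hE, h⟩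
  have hsm : E • (1 : A) = algebraMap ℂ A E := (Algebra.algebraMap_eq_smul_one E).symm
  have hspec : spectrum ℂ a = spectrum ℂ a - ({E} : Set ℂ) := by
    conv_lhs => rw [← spectrum.units_conjugate (u := u) (a := a), h, hsm,
      ← spectrum.sub_singleton_eq]
  have key : ∀ z ∈ spectrum ℂ a, z - E ∈ spectrum ℂ a := by
    intro z hz
    rw [hspec]
    exact Set.sub_mem_sub hz rfl
  have iter : ∀ n : ℕ, ∀ z ∈ spectrum ℂ a, z - (n : ℂ) * E ∈ spectrum ℂ a := by
    intro n
    induction n with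
    | zero => simp
    | succ n ih =>
      intro z hz
      have := key _ (ih z hz)
      push_cast
      rw [add_mul, one_mul, ← sub_sub]
      exact this
  obtain ⟨z, hz⟩ := spectrum.nonempty a
  obtain ⟨M, hM⟩ := (spectrum.isBounded (𝕜 := ℂ) (A := A) a).subset_closedBall 0
  obtain ⟨n, hn⟩ := exists_nat_gt ((M + ‖z‖) / ‖E‖)
  have hn' : M + ‖z‖ < n * ‖E‖ := by
    rw [div_lt_iff₀ (norm_pos_iff.mpr hE)] at hn
    linarith
  have hmem := iter n z hz
  have hb := hM hmem
  simp only [Metric.mem_closedBall, dist_zero_right] at hb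
  have : (n : ℝ) * ‖E‖ - ‖z‖ ≤ ‖z - (n : ℂ) * E‖ := by
    have := norm_sub_norm_le ((n:ℂ) * E) z
    have h1 : ‖(n : ℂ) * E‖ = n * ‖E‖ := by simp
    calc (n : ℝ) * ‖E‖ - ‖z‖ = ‖(n : ℂ) * E‖ - ‖z‖ := by rw [h1]
      _ ≤ ‖(n:ℂ) * E - z‖ := norm_sub_norm_le _ _
      _ = ‖z - (n : ℂ) * E‖ := norm_sub_rev _ _
  linarith
end

section
/- Let m′, m″ be positive real numbers and P′, P″ arbitrary real numbers. Set H′ := √(P′² + m′²), H″ := √(P″² + m″²), and p := P′·H″ − P″·H′. Then (H′ + H″)² − (P′ + P″)² = m′² + m″² + 2·√((m′·m″)² + p²). -/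
/-- **Relativistic mass-shell identity (Section 6).**
For `H′ = √(P′² + m′²)`, `H″ = √(P″² + m″²)` and `p = P′H″ − P″H′` one has
`(H′ + H″)² − (P′ + P″)² = m′² + m″² + 2√((m′m″)² + p²)`. -/
theorem invariant_mass_squared_identity
    (m' m'' : ℝ) (hm' : 0 < m') (hm'' : 0 < m'') (P' P'' : ℝ) :
    (Real.sqrt (P' ^ 2 + m' ^ 2) + Real.sqrt (P'' ^ 2 + m'' ^ 2)) ^ 2
        - (P' + P'') ^ 2
      = m' ^ 2 + m'' ^ 2
        + 2 * Real.sqrt ((m' * m'') ^ 2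
            + (P' * Real.sqrt (P'' ^ 2 + m'' ^ 2)
                - P'' * Real.sqrt (P' ^ 2 + m' ^ 2)) ^ 2) := by
  set A := Real.sqrt (P' ^ 2 + m' ^ 2) with hAdef
  set B := Real.sqrt (P'' ^ 2 + m'' ^ 2) with hBdef
  have hA : A ^ 2 = P' ^ 2 + m' ^ 2 := Real.sq_sqrt (by positivity)
  have hB : B ^ 2 = P'' ^ 2 + m'' ^ 2 := Real.sq_sqrt (by positivity)
  have hA0 : 0 ≤ A := Real.sqrt_nonneg _
  have hB0 : 0 ≤ B := Real.sqrt_nonneg _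
  have hAge : |P'| ≤ A := by
    rw [hAdef, ← Real.sqrt_sq_eq_abs]
    exact Real.sqrt_le_sqrt (by nlinarith)
  have hBge : |P''| ≤ B := by
    rw [hBdef, ← Real.sqrt_sq_eq_abs]
    exact Real.sqrt_le_sqrt (by nlinarith)
  have hnn : 0 ≤ A * B - P' * P'' := by
    have h1 : |P' * P''| ≤ A * B := by
      rw [abs_mul]
      exact mul_le_mul hAge hBge (abs_nonneg _) hA0
    have := (abs_le.mp h1).2
    linarith
  have key : Real.sqrt ((m' * m'') ^ 2 + (P' * B - P'' * A) ^ 2)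
      = A * B - P' * P'' := by
    rw [show (m' * m'') ^ 2 + (P' * B - P'' * A) ^ 2 = (A * B - P' * P'') ^ 2 by
      nlinarith [hA, hB]]
    exact Real.sqrt_sq hnn
  rw [key]
  nlinarith [hA, hB]
end

section
/- Let m′, m″ be positive real numbers. For (P′, P″) ∈ ℝ², set H′(P′) := √(P′² + m′²) and H″(P″) := √(P″² + m″²). On infinitely differentiable functions f : ℝ² → ℂ define the multiplication operator p by (p f)(P′,P″) := (P′·H″(P″) − P″·H′(P′))·f(P′,P″) and the first-order differential operator q by (q f)(P′,P″) := −i·H′(P′)·H″(P″)·( ∂f/∂P″ − ∂f/∂P′ )(P′,P″). Then for every smooth f and every (P′,P″) ∈ ℝ², ((p∘q − q∘p) f)(P′,P″) = −i·(H′(P′) + H″(P″))·√((m′·m″)² + (P′·H″(P″) − P″·H′(P′))²)·f(P′,P″). -/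
open Real

/-- The multiplication operator `p`: `(p f)(P′,P″) = (P′H″(P″) − P″H′(P′)) f(P′,P″)`. -/
noncomputable def relMomOp (m' m'' : ℝ) (f : ℝ × ℝ → ℂ) : ℝ × ℝ → ℂ :=
  fun x => ((x.1 * Real.sqrt (x.2 ^ 2 + m'' ^ 2)
    - x.2 * Real.sqrt (x.1 ^ 2 + m' ^ 2) : ℝ) : ℂ) * f x

/-- The first-order differential operator
`q = −i H′H″ (∂/∂P″ − ∂/∂P′)` (that is, `q = H′K″ − H″K′`). -/
noncomputable def relTimeOp (m' m'' : ℝ) (f : ℝ × ℝ → ℂ) : ℝ × ℝ → ℂ :=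
  fun x => (-Complex.I)
    * ((Real.sqrt (x.1 ^ 2 + m' ^ 2) * Real.sqrt (x.2 ^ 2 + m'' ^ 2) : ℝ) : ℂ)
    * (fderiv ℝ f x (0, 1) - fderiv ℝ f x (1, 0))

lemma sqrt_sq_add_hasDerivAt (m t : ℝ) (hm : 0 < m) :
    HasDerivAt (fun t => Real.sqrt (t ^ 2 + m ^ 2)) (t / Real.sqrt (t ^ 2 + m ^ 2)) t := by
  have h : (0:ℝ) < t ^ 2 + m ^ 2 := by positivity
  have h2 := (Real.hasDerivAt_sqrt h.ne').comp t ((hasDerivAt_pow 2 t).add_const (m ^ 2))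
  refine h2.congr_deriv ?_
  have hs : Real.sqrt (t ^ 2 + m ^ 2) ≠ 0 := (Real.sqrt_pos.2 h).ne'
  norm_num
  field_simp

lemma key_sqrt (m' m'' x1 x2 : ℝ) (hm' : 0 < m') (hm'' : 0 < m'') :
    Real.sqrt ((m' * m'') ^ 2 + (x1 * Real.sqrt (x2 ^ 2 + m'' ^ 2) - x2 * Real.sqrt (x1 ^ 2 + m' ^ 2)) ^ 2)
      = Real.sqrt (x1 ^ 2 + m' ^ 2) * Real.sqrt (x2 ^ 2 + m'' ^ 2) - x1 * x2 := by
  set s := Real.sqrt (x1 ^ 2 + m' ^ 2) with hsdef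
  set u := Real.sqrt (x2 ^ 2 + m'' ^ 2) with hudef
  have hs2 : s ^ 2 = x1 ^ 2 + m' ^ 2 := Real.sq_sqrt (by positivity)
  have hu2 : u ^ 2 = x2 ^ 2 + m'' ^ 2 := Real.sq_sqrt (by positivity)
  have hx1 : |x1| ≤ s := by
    rw [hsdef, ← Real.sqrt_sq_eq_abs]; exact Real.sqrt_le_sqrt (by nlinarith)
  have hx2 : |x2| ≤ u := by
    rw [hudef, ← Real.sqrt_sq_eq_abs]; exact Real.sqrt_le_sqrt (by nlinarith)
  have hnn : 0 ≤ s * u - x1 * x2 := by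
    have : x1 * x2 ≤ |x1| * |x2| := le_trans (le_abs_self _) (abs_mul _ _).le
    nlinarith [abs_nonneg x1, abs_nonneg x2]
  rw [show (m' * m'') ^ 2 + (x1 * u - x2 * s) ^ 2 = (s * u - x1 * x2) ^ 2 by nlinarith]
  exact Real.sqrt_sq hnn

/-- The commutation relation `[p, q] = −i H ((m′m″)² + p²)^{1/2}` of Section 6,
where `H = H′ + H″` is the total energy. -/
theorem relativistic_p_q_commutator (m' m'' : ℝ) (hm' : 0 < m') (hm'' : 0 < m'')
    (f : ℝ × ℝ → ℂ) (hf : ContDiff ℝ (⊤ : ℕ∞) f) (x : ℝ × ℝ) :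
    relMomOp m' m'' (relTimeOp m' m'' f) x - relTimeOp m' m'' (relMomOp m' m'' f) x
      = (-Complex.I)
        * ((Real.sqrt (x.1 ^ 2 + m' ^ 2) + Real.sqrt (x.2 ^ 2 + m'' ^ 2) : ℝ) : ℂ)
        * ((Real.sqrt ((m' * m'') ^ 2
            + (x.1 * Real.sqrt (x.2 ^ 2 + m'' ^ 2)
              - x.2 * Real.sqrt (x.1 ^ 2 + m' ^ 2)) ^ 2) : ℝ) : ℂ)
        * f x := by
  have hd1 := sqrt_sq_add_hasDerivAt m' x.1 hm'
  have hd2 := sqrt_sq_add_hasDerivAt m'' x.2 hm''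
  have hgR := ((hasFDerivAt_fst (𝕜 := ℝ) (p := x)).mul (hd2.comp_hasFDerivAt x hasFDerivAt_snd)).sub
    ((hasFDerivAt_snd (𝕜 := ℝ) (p := x)).mul (hd1.comp_hasFDerivAt x hasFDerivAt_fst))
  have hgC := Complex.ofRealCLM.hasFDerivAt.comp x hgR
  have hfd : HasFDerivAt f (fderiv ℝ f x) x := ((hf.differentiable (by simp)) x).hasFDerivAt
  have hprod : HasFDerivAt (relMomOp m' m'' f) _ x := hgC.mul hfd
  have e1 := hprod.fderiv
  have hs : Real.sqrt (x.1 ^ 2 + m' ^ 2) ≠ 0 := (Real.sqrt_pos.2 (by positivity)).ne'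
  have hu : Real.sqrt (x.2 ^ 2 + m'' ^ 2) ≠ 0 := (Real.sqrt_pos.2 (by positivity)).ne'
  have hsC : (Real.sqrt (x.1 ^ 2 + m' ^ 2) : ℂ) ≠ 0 := by exact_mod_cast hs
  have huC : (Real.sqrt (x.2 ^ 2 + m'' ^ 2) : ℂ) ≠ 0 := by exact_mod_cast hu
  rw [key_sqrt m' m'' x.1 x.2 hm' hm'']
  simp only [relMomOp, relTimeOp, e1]
  simp only [ContinuousLinearMap.add_apply, ContinuousLinearMap.sub_apply,
    ContinuousLinearMap.smul_apply, ContinuousLinearMap.coe_fst', ContinuousLinearMap.coe_snd',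
    ContinuousLinearMap.comp_apply, Complex.ofRealCLM_apply, ContinuousLinearMap.coe_smul',
    Pi.smul_apply, Function.comp, smul_eq_mul, Pi.mul_apply, Pi.sub_apply]
  push_cast
  field_simp
  ring
end

section
/- Let m′, m″ be positive real numbers. For (P′, P″) ∈ ℝ², set H′(P′) := √(P′² + m′²) and H″(P″) := √(P″² + m″²). On infinitely differentiable functions f : ℝ² → ℂ define the multiplication operator p by (p f)(P′,P″) := (P′·H″(P″) − P″·H′(P′))·f(P′,P″) and the first-order differential operator r by (r f)(P′,P″) := −i·( H′(P′)·P″·∂f/∂P′ − H″(P″)·P′·∂f/∂P″ )(P′,P″). Then for every smooth f and every (P′,P″) ∈ ℝ², ((r∘p − p∘r) f)(P′,P″) = −i·(P′ + P″)·√((m′·m″)² + (P′·H″(P″) − P″·H′(P′))²)·f(P′,P″). -/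
open Real

/-- The first-order differential operator
`r = −i (H′P″ ∂/∂P′ − H″P′ ∂/∂P″)` (that is, `r = K′P″ − K″P′`). -/
noncomputable def relSpaceOp (m' m'' : ℝ) (f : ℝ × ℝ → ℂ) : ℝ × ℝ → ℂ :=
  fun x => (-Complex.I)
    * (((Real.sqrt (x.1 ^ 2 + m' ^ 2) * x.2 : ℝ) : ℂ) * fderiv ℝ f x (1, 0)
      - ((Real.sqrt (x.2 ^ 2 + m'' ^ 2) * x.1 : ℝ) : ℂ) * fderiv ℝ f x (0, 1))

lemma sqrt_hasDerivAt (m t : ℝ) (hm : 0 < m) :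
    HasDerivAt (fun s => Real.sqrt (s ^ 2 + m ^ 2)) (t / Real.sqrt (t ^ 2 + m ^ 2)) t := by
  have h0 : t ^ 2 + m ^ 2 ≠ 0 := by positivity
  have h : HasDerivAt (fun s : ℝ => s ^ 2 + m ^ 2) (2 * t) t := by
    simpa using ((hasDerivAt_pow 2 t).add_const (m ^ 2))
  have := h.sqrt h0
  convert this using 1
  field_simp

/-- The commutation relation `[r, p] = −i P ((m′m″)² + p²)^{1/2}` of Section 6,
where `P = P′ + P″` is the total momentum. -/
theorem relativistic_r_p_commutator (m' m'' : ℝ) (hm' : 0 < m') (hm'' : 0 < m'')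
    (f : ℝ × ℝ → ℂ) (hf : ContDiff ℝ (⊤ : ℕ∞) f) (x : ℝ × ℝ) :
    relSpaceOp m' m'' (relMomOp m' m'' f) x - relMomOp m' m'' (relSpaceOp m' m'' f) x
      = (-Complex.I) * ((x.1 + x.2 : ℝ) : ℂ)
        * ((Real.sqrt ((m' * m'') ^ 2
            + (x.1 * Real.sqrt (x.2 ^ 2 + m'' ^ 2)
              - x.2 * Real.sqrt (x.1 ^ 2 + m' ^ 2)) ^ 2) : ℝ) : ℂ)
        * f x := by
  set h1 := Real.sqrt (x.1 ^ 2 + m' ^ 2) with hh1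
  set h2 := Real.sqrt (x.2 ^ 2 + m'' ^ 2) with hh2
  have h1pos : 0 < h1 := Real.sqrt_pos.2 (by positivity)
  have h2pos : 0 < h2 := Real.sqrt_pos.2 (by positivity)
  -- partial derivatives of g
  have hfst := (ContinuousLinearMap.fst ℝ ℝ ℝ).hasFDerivAt (x := x)
  have hsnd := (ContinuousLinearMap.snd ℝ ℝ ℝ).hasFDerivAt (x := x)
  have hs2 : HasFDerivAt (fun y : ℝ × ℝ => Real.sqrt (y.2 ^ 2 + m'' ^ 2))
      ((x.2 / h2) • ContinuousLinearMap.snd ℝ ℝ ℝ) x :=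
    (sqrt_hasDerivAt m'' x.2 hm'').comp_hasFDerivAt x hsnd
  have hs1 : HasFDerivAt (fun y : ℝ × ℝ => Real.sqrt (y.1 ^ 2 + m' ^ 2))
      ((x.1 / h1) • ContinuousLinearMap.fst ℝ ℝ ℝ) x :=
    (sqrt_hasDerivAt m' x.1 hm').comp_hasFDerivAt x hfst
  have hg : HasFDerivAt (fun y : ℝ × ℝ =>
      y.1 * Real.sqrt (y.2 ^ 2 + m'' ^ 2) - y.2 * Real.sqrt (y.1 ^ 2 + m' ^ 2))
      ((x.1 • ((x.2 / h2) • ContinuousLinearMap.snd ℝ ℝ ℝ)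
          + h2 • ContinuousLinearMap.fst ℝ ℝ ℝ)
        - (x.2 • ((x.1 / h1) • ContinuousLinearMap.fst ℝ ℝ ℝ)
          + h1 • ContinuousLinearMap.snd ℝ ℝ ℝ)) x :=
    (hfst.mul hs2).sub (hsnd.mul hs1)
  have hgc : HasFDerivAt (fun y : ℝ × ℝ =>
      ((y.1 * Real.sqrt (y.2 ^ 2 + m'' ^ 2)
        - y.2 * Real.sqrt (y.1 ^ 2 + m' ^ 2) : ℝ) : ℂ)) (Complex.ofRealCLM.comp
        ((x.1 • ((x.2 / h2) • ContinuousLinearMap.snd ℝ ℝ ℝ)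
            + h2 • ContinuousLinearMap.fst ℝ ℝ ℝ)
          - (x.2 • ((x.1 / h1) • ContinuousLinearMap.fst ℝ ℝ ℝ)
            + h1 • ContinuousLinearMap.snd ℝ ℝ ℝ))) x :=
    (Complex.ofRealCLM.hasFDerivAt).comp x hg
  have hfd : HasFDerivAt f (fderiv ℝ f x) x :=
    (hf.differentiable (by simp) x).hasFDerivAt
  have hF : HasFDerivAt (relMomOp m' m'' f)
      ((((x.1 * h2 - x.2 * h1 : ℝ) : ℂ)) • fderiv ℝ f x
        + f x • (Complex.ofRealCLM.comp
        ((x.1 • ((x.2 / h2) • ContinuousLinearMap.snd ℝ ℝ ℝ)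
            + h2 • ContinuousLinearMap.fst ℝ ℝ ℝ)
          - (x.2 • ((x.1 / h1) • ContinuousLinearMap.fst ℝ ℝ ℝ)
            + h1 • ContinuousLinearMap.snd ℝ ℝ ℝ)))) x := hgc.mul hfd
  have hFd := hF.fderiv
  -- sqrt identity
  have hsq1 : h1 ^ 2 = x.1 ^ 2 + m' ^ 2 := Real.sq_sqrt (by positivity)
  have hsq2 : h2 ^ 2 = x.2 ^ 2 + m'' ^ 2 := Real.sq_sqrt (by positivity)
  have habs1 : |x.1| ≤ h1 := by
    rw [← Real.sqrt_sq_eq_abs]; exact Real.sqrt_le_sqrt (by nlinarith)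
  have habs2 : |x.2| ≤ h2 := by
    rw [← Real.sqrt_sq_eq_abs]; exact Real.sqrt_le_sqrt (by nlinarith)
  have hnn : 0 ≤ h1 * h2 - x.1 * x.2 := by
    nlinarith [le_abs_self (x.1 * x.2), abs_mul x.1 x.2, abs_nonneg x.1, abs_nonneg x.2]
  have heq : (m' * m'') ^ 2 + (x.1 * h2 - x.2 * h1) ^ 2 = (h1 * h2 - x.1 * x.2) ^ 2 := by
    linear_combination (x.2 ^ 2 - h2 ^ 2) * hsq1 - m' ^ 2 * hsq2
  have hs : Real.sqrt ((m' * m'') ^ 2 + (x.1 * h2 - x.2 * h1) ^ 2) = h1 * h2 - x.1 * x.2 := by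
    rw [heq, Real.sqrt_sq hnn]
  show relSpaceOp m' m'' (relMomOp m' m'' f) x - relMomOp m' m'' (relSpaceOp m' m'' f) x
      = (-Complex.I) * ((x.1 + x.2 : ℝ) : ℂ)
        * ((Real.sqrt ((m' * m'') ^ 2 + (x.1 * h2 - x.2 * h1) ^ 2) : ℝ) : ℂ) * f x
  rw [hs]
  simp only [relSpaceOp, relMomOp, hFd]
  simp only [ContinuousLinearMap.add_apply, ContinuousLinearMap.coe_smul',
    ContinuousLinearMap.coe_comp', ContinuousLinearMap.coe_sub', Pi.smul_apply, Pi.sub_apply,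
    Function.comp_apply, ContinuousLinearMap.coe_fst', ContinuousLinearMap.coe_snd',
    Complex.ofRealCLM_apply, smul_eq_mul, Complex.real_smul]
  have hc1 : (h1 : ℂ) ≠ 0 := by exact_mod_cast h1pos.ne'
  have hc2 : (h2 : ℂ) ≠ 0 := by exact_mod_cast h2pos.ne'
  push_cast
  field_simp
  ring
end

section
/- Let A be an associative unital ℂ-algebra and let K, h_i, h_k, π_i, π_k, Q, R be elements of A satisfying the commutation relations [K, h_i] = −i π_i, [K, h_k] = −i π_k, [K, π_i] = −i h_i, [K, π_k] = −i h_k, [K, Q] = −i R, and [K, R] = −i Q (where [a,b] := a·b − b·a). Define L := (h_i + h_k)·Q − (π_i + π_k)·R and Y := (h_i + h_k)·R − (π_i + π_k)·Q. Then [K, L] = 0 and [K, Y] = 0. -/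
/-- **Poincaré invariance of the relative coordinates (Section 6).**
In a unital associative `ℂ`-algebra, if `[K, h_i] = −i π_i`, `[K, h_k] = −i π_k`,
`[K, π_i] = −i h_i`, `[K, π_k] = −i h_k`, `[K, Q] = −i R` and `[K, R] = −i Q`,
then `L = (h_i + h_k) Q − (π_i + π_k) R` and `Y = (h_i + h_k) R − (π_i + π_k) Q`
commute with the boost generator `K`. -/
theorem boost_invariance_of_relative_coordinates
    {A : Type*} [Ring A] [Algebra ℂ A]
    (K hi hk πi πk Q R : A)
    (hKhi : K * hi - hi * K = (-Complex.I) • πi)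
    (hKhk : K * hk - hk * K = (-Complex.I) • πk)
    (hKπi : K * πi - πi * K = (-Complex.I) • hi)
    (hKπk : K * πk - πk * K = (-Complex.I) • hk)
    (hKQ : K * Q - Q * K = (-Complex.I) • R)
    (hKR : K * R - R * K = (-Complex.I) • Q) :
    K * ((hi + hk) * Q - (πi + πk) * R) - ((hi + hk) * Q - (πi + πk) * R) * K = 0 ∧
    K * ((hi + hk) * R - (πi + πk) * Q) - ((hi + hk) * R - (πi + πk) * Q) * K = 0 := by
  have hS : K * (hi + hk) - (hi + hk) * K = (-Complex.I) • (πi + πk) := by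
    rw [smul_add, ← hKhi, ← hKhk]; noncomm_ring
  have hT : K * (πi + πk) - (πi + πk) * K = (-Complex.I) • (hi + hk) := by
    rw [smul_add, ← hKπi, ← hKπk]; noncomm_ring
  constructor
  · have key : K * ((hi + hk) * Q - (πi + πk) * R) - ((hi + hk) * Q - (πi + πk) * R) * K
        = ((K * (hi + hk) - (hi + hk) * K) * Q + (hi + hk) * (K * Q - Q * K))
          - ((K * (πi + πk) - (πi + πk) * K) * R + (πi + πk) * (K * R - R * K)) := by
      noncomm_ring
    rw [key, hS, hT, hKQ, hKR]
    simp only [smul_mul_assoc, mul_smul_comm]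
    abel
  · have key : K * ((hi + hk) * R - (πi + πk) * Q) - ((hi + hk) * R - (πi + πk) * Q) * K
        = ((K * (hi + hk) - (hi + hk) * K) * R + (hi + hk) * (K * R - R * K))
          - ((K * (πi + πk) - (πi + πk) * K) * Q + (πi + πk) * (K * Q - Q * K)) := by
      noncomm_ring
    rw [key, hS, hT, hKQ, hKR]
    simp only [smul_mul_assoc, mul_smul_comm]
    abel
end
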